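/- Let H be a complex Hilbert space, T a densely defined self-adjoint unbounded operator on H, and M : H → H a bounded self-adjoint operator. For k ≥ 1 define the Sobolev norm on dom T^k by ‖x‖_{T,k}² = ‖T^k x‖² + ‖x‖², where dom T¹ = dom T, dom T^{k+1} = {x ∈ dom T : T x ∈ dom T^k}, and T^{k+1} x = T^k(T x). Suppose that for every k ≥ 1, M maps dom T^k into itself and is bounded for the norm ‖·‖_{T,k}, i.e., there is C_k > 0 with ‖M x‖_{T,k} ≤ C_k ‖x‖_{T,k} for all x ∈ dom T^k. Then for every k ≥ 1, dom (T + M)^k = dom T^k (with T + M having domain dom T), and the norms ‖·‖_{T,k} and ‖·‖_{T+M,k} are equivalent on this common domain: there exist constants c, C > 0 such that c ‖x‖_{T,k} ≤ ‖x‖_{T+M,k} ≤ C ‖x‖_{T,k} for all x ∈ dom T^k, where ‖x‖_{T+M,k}² = ‖(T + M)^k x‖² + ‖x‖². -/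

import Mathlib

open scoped InnerProductSpace

variable {H : Type*} [NormedAddCommGroup H] [InnerProductSpace ℂ H] [CompleteSpace H]

/-- The sum `T + M` of an unbounded operator `T` and a bounded operator `M`,
with domain `dom T`, given by `x ↦ T x + M x`. -/
noncomputable def addBounded (T : H →ₗ.[ℂ] H) (M : H →L[ℂ] H) : H →ₗ.[ℂ] H where
  domain := T.domain
  toFun := T.toFun + (M : H →ₗ[ℂ] H).comp T.domain.subtype

/-- The domain of the `k`-th power of an unbounded operator `T`:
`dom T⁰ = H`, `dom T¹ = dom T` and `dom T^(k+1) = {x ∈ dom T : T x ∈ dom T^k}`. -/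
def domPow (T : H →ₗ.[ℂ] H) : ℕ → Set H
  | 0 => Set.univ
  | k + 1 => {x : H | ∃ hx : x ∈ T.domain, T ⟨x, hx⟩ ∈ domPow T k}

/-- The `k`-th power of `T` applied to `x ∈ dom T^k`: `T⁰ x = x` and
`T^(k+1) x = T^k (T x)`. -/
noncomputable def powApply (T : H →ₗ.[ℂ] H) : (k : ℕ) → (x : H) → x ∈ domPow T k → H
  | 0, x, _ => x
  | k + 1, x, hx => powApply T k (T ⟨x, hx.choose⟩) hx.choose_spec

/-- The `k`-th Sobolev norm of `x ∈ dom T^k`: `‖x‖_{T,k} = √(‖T^k x‖² + ‖x‖²)`. -/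
noncomputable def sobNorm (T : H →ₗ.[ℂ] H) (k : ℕ) (x : H) (hx : x ∈ domPow T k) : ℝ :=
  Real.sqrt (‖powApply T k x hx‖ ^ 2 + ‖x‖ ^ 2)

/-!
Induct on `k`, carrying `dom (T + M)^k = dom T^k` together with bounds of each of the norms
`‖·‖_{T,k}`, `‖·‖_{T+M,k}` by a multiple of the other. Since
`(T + M)^(k+1) x = (T + M)^k (T x + M x)`, the level-`k` bounds, `‖T x‖_{T,k} ≤ 2 ‖x‖_{T,k+1}` and
the `‖·‖_{T,k}`-boundedness of `M` give the bound at level `k + 1`; the reverse bound is the same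
argument with `T + M` in the role of `T` and `-M` in that of `M`, which is bounded for
`‖·‖_{T+M,k}` by the level-`k` equivalence.

The estimates `‖A^j x‖ ≤ ‖x‖_{A,k}` for `j ≤ k` behind `‖T x‖_{T,k} ≤ 2 ‖x‖_{T,k+1}` hold for every
symmetric `A`: symmetry gives `‖A^(i+1) x‖² = ⟪A^i x, A^(i+2) x⟫ ≤ ‖A^i x‖ ‖A^(i+2) x‖`, so
`i ↦ ‖A^i x‖` is log-convex and `‖A^j x‖ ≤ max ‖x‖ ‖A^k x‖`.
-/

section SobolevScale

variable {E : Type*} [NormedAddCommGroup E] [InnerProductSpace ℂ E]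
  {A B : E →ₗ.[ℂ] E} {k : ℕ} {x y : E}

theorem domPow_succ_subset : domPow A (k + 1) ⊆ domPow A k := by
  induction k with
  | zero => exact fun _ _ => trivial
  | succ k ih => exact fun _ ⟨hx, hAx⟩ => ⟨hx, ih hAx⟩

theorem add_mem_domPow (hx : x ∈ domPow A k) (hy : y ∈ domPow A k) : x + y ∈ domPow A k := by
  induction k generalizing x y with
  | zero => trivial
  | succ k ih => exact ⟨add_mem hx.1 hy.1, (A.map_add ⟨x, hx.1⟩ ⟨y, hy.1⟩) ▸ ih hx.2 hy.2⟩

theorem neg_mem_domPow (hx : x ∈ domPow A k) : -x ∈ domPow A k := by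
  induction k generalizing x with
  | zero => trivial
  | succ k ih => exact ⟨neg_mem hx.1, (A.map_neg ⟨x, hx.1⟩) ▸ ih hx.2⟩

theorem powApply_succ (hx : x ∈ domPow A (k + 1)) (hxA : x ∈ A.domain)
    (hAx : A ⟨x, hxA⟩ ∈ domPow A k) :
    powApply A (k + 1) x hx = powApply A k (A ⟨x, hxA⟩) hAx :=
  rfl

theorem powApply_congr (h : x = y) (hx : x ∈ domPow A k) (hy : y ∈ domPow A k) :
    powApply A k x hx = powApply A k y hy := by
  subst h; rfl

theorem powApply_add (hx : x ∈ domPow A k) (hy : y ∈ domPow A k) (hxy : x + y ∈ domPow A k) :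
    powApply A k (x + y) hxy = powApply A k x hx + powApply A k y hy := by
  induction k generalizing x y with
  | zero => rfl
  | succ k ih =>
    exact (powApply_congr (A.map_add ⟨x, hx.1⟩ ⟨y, hy.1⟩) _ (add_mem_domPow hx.2 hy.2)).trans
      (ih hx.2 hy.2 _)

theorem powApply_neg (hx : x ∈ domPow A k) (hx' : -x ∈ domPow A k) :
    powApply A k (-x) hx' = -powApply A k x hx := by
  induction k generalizing x with
  | zero => rfl
  | succ k ih =>
    exact (powApply_congr (A.map_neg ⟨x, hx.1⟩) _ (neg_mem_domPow hx.2)).trans (ih hx.2 _)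

theorem sobNorm_eq_norm_toLp (hx : x ∈ domPow A k) :
    sobNorm A k x hx = ‖WithLp.toLp 2 (powApply A k x hx, x)‖ := by
  rw [WithLp.prod_norm_eq_of_L2]
  rfl

theorem sobNorm_add_le (hx : x ∈ domPow A k) (hy : y ∈ domPow A k) (hxy : x + y ∈ domPow A k) :
    sobNorm A k (x + y) hxy ≤ sobNorm A k x hx + sobNorm A k y hy := by
  simp only [sobNorm_eq_norm_toLp, powApply_add hx hy hxy, ← Prod.mk_add_mk, WithLp.toLp_add]
  exact norm_add_le _ _

theorem sobNorm_neg (hx : x ∈ domPow A k) (hx' : -x ∈ domPow A k) :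
    sobNorm A k (-x) hx' = sobNorm A k x hx := by
  simp only [sobNorm, powApply_neg hx hx', norm_neg]

theorem norm_powApply_le_sobNorm (hx : x ∈ domPow A k) :
    ‖powApply A k x hx‖ ≤ sobNorm A k x hx :=
  Real.le_sqrt_of_sq_le (le_add_of_nonneg_right (sq_nonneg _))

theorem norm_le_sobNorm (hx : x ∈ domPow A k) : ‖x‖ ≤ sobNorm A k x hx :=
  Real.le_sqrt_of_sq_le (le_add_of_nonneg_left (sq_nonneg _))

theorem sobNorm_le_add (hx : x ∈ domPow A k) :
    sobNorm A k x hx ≤ ‖powApply A k x hx‖ + ‖x‖ :=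
  Real.sqrt_le_iff.mpr
    ⟨by positivity, by nlinarith [norm_nonneg (powApply A k x hx), norm_nonneg x]⟩

theorem sobNorm_zero (hx : x ∈ domPow A 0) : sobNorm A 0 x hx = √2 * ‖x‖ := by
  change √(‖x‖ ^ 2 + ‖x‖ ^ 2) = _
  rw [← two_mul, Real.sqrt_mul zero_le_two, Real.sqrt_sq (norm_nonneg _)]

theorem inner_powApply_succ_self (hA : A.IsFormalAdjoint A) {i : ℕ} (h₀ : x ∈ domPow A i)
    (h₁ : x ∈ domPow A (i + 1)) (h₂ : x ∈ domPow A (i + 2)) :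
    ⟪powApply A (i + 1) x h₁, powApply A (i + 1) x h₁⟫_ℂ
      = ⟪powApply A i x h₀, powApply A (i + 2) x h₂⟫_ℂ := by
  induction i generalizing x with
  | zero => exact hA ⟨x, h₂.1⟩ ⟨_, h₂.2.1⟩
  | succ i ih => exact ih h₀.2 h₁.2 h₂.2

theorem norm_powApply_succ_sq_le (hA : A.IsFormalAdjoint A) {i : ℕ} (h₀ : x ∈ domPow A i)
    (h₁ : x ∈ domPow A (i + 1)) (h₂ : x ∈ domPow A (i + 2)) :
    ‖powApply A (i + 1) x h₁‖ ^ 2 ≤ ‖powApply A i x h₀‖ * ‖powApply A (i + 2) x h₂‖ := by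
  rw [← inner_self_eq_norm_sq (𝕜 := ℂ), inner_powApply_succ_self hA h₀ h₁ h₂]
  exact (RCLike.re_le_norm _).trans (norm_inner_le_norm _ _)

theorem norm_powApply_le_max_succ (hA : A.IsFormalAdjoint A) (hk : x ∈ domPow A k)
    (hk₁ : x ∈ domPow A (k + 1)) :
    ‖powApply A k x hk‖ ≤ max ‖x‖ ‖powApply A (k + 1) x hk₁‖ := by
  induction k with
  | zero => exact le_max_left _ _
  | succ k ih =>
    set a := ‖powApply A k x (domPow_succ_subset hk)‖
    set b := ‖powApply A (k + 1) x hk‖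
    set c := ‖powApply A (k + 2) x hk₁‖
    have hsq : b ^ 2 ≤ a * c := norm_powApply_succ_sq_le hA _ hk hk₁
    by_contra! hbig
    obtain ⟨hxb, hcb⟩ := max_lt_iff.mp hbig
    have hab : a ≤ b := (ih (domPow_succ_subset hk) hk).trans (max_le hxb.le le_rfl)
    have hb : 0 < b := (norm_nonneg x).trans_lt hxb
    have : b * b < b * b := calc
      b * b = b ^ 2 := sq b |>.symm
      _ ≤ a * c := hsq
      _ ≤ b * c := mul_le_mul_of_nonneg_right hab (norm_nonneg _)
      _ < b * b := mul_lt_mul_of_pos_left hcb hb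
    exact lt_irrefl _ this

theorem norm_powApply_le_max (hA : A.IsFormalAdjoint A) {j : ℕ} (hjk : j ≤ k)
    (hj : x ∈ domPow A j) (hk : x ∈ domPow A k) :
    ‖powApply A j x hj‖ ≤ max ‖x‖ ‖powApply A k x hk‖ := by
  induction k, hjk using Nat.le_induction with
  | base => exact le_max_right _ _
  | succ k _ ih =>
    exact (ih (domPow_succ_subset hk)).trans
      (max_le (le_max_left _ _) (norm_powApply_le_max_succ hA _ hk))

theorem norm_powApply_le_sobNorm_of_le (hA : A.IsFormalAdjoint A) {j : ℕ} (hjk : j ≤ k)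
    (hj : x ∈ domPow A j) (hk : x ∈ domPow A k) :
    ‖powApply A j x hj‖ ≤ sobNorm A k x hk :=
  (norm_powApply_le_max hA hjk hj hk).trans
    (max_le (norm_le_sobNorm hk) (norm_powApply_le_sobNorm hk))

theorem sobNorm_le_of_le (hA : A.IsFormalAdjoint A) {j : ℕ} (hjk : j ≤ k)
    (hj : x ∈ domPow A j) (hk : x ∈ domPow A k) :
    sobNorm A j x hj ≤ 2 * sobNorm A k x hk := by
  linarith [sobNorm_le_add hj, norm_powApply_le_sobNorm_of_le hA hjk hj hk, norm_le_sobNorm hk]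

theorem sobNorm_apply_le (hA : A.IsFormalAdjoint A) (hx : x ∈ domPow A (k + 1))
    (hxA : x ∈ A.domain) (hAx : A ⟨x, hxA⟩ ∈ domPow A k) :
    sobNorm A k (A ⟨x, hxA⟩) hAx ≤ 2 * sobNorm A (k + 1) x hx := by
  have hk : ‖powApply A k (A ⟨x, hxA⟩) hAx‖ ≤ sobNorm A (k + 1) x hx :=
    norm_powApply_le_sobNorm hx
  have h1 : ‖A ⟨x, hxA⟩‖ ≤ sobNorm A (k + 1) x hx :=
    norm_powApply_le_sobNorm_of_le hA (j := 1) (by omega) ⟨hxA, trivial⟩ hx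
  linarith [sobNorm_le_add hAx]

def SobNormDominated (A B : E →ₗ.[ℂ] E) (k : ℕ) (C : ℝ) : Prop :=
  ∀ x (hxA : x ∈ domPow A k) (hxB : x ∈ domPow B k), sobNorm B k x hxB ≤ C * sobNorm A k x hxA

def SobNormBounded (A : E →ₗ.[ℂ] E) (N : E → E) (k : ℕ) (C : ℝ) : Prop :=
  ∀ x (hx : x ∈ domPow A k) (hNx : N x ∈ domPow A k), sobNorm A k (N x) hNx ≤ C * sobNorm A k x hx

variable {N : E → E} {C Cₙ : ℝ}

theorem domPow_succ_subset_of_apply_eq_add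
    (hBA : ∀ x (hx : x ∈ A.domain), ∃ hx' : x ∈ B.domain, B ⟨x, hx'⟩ = A ⟨x, hx⟩ + N x)
    (hdom : domPow A k ⊆ domPow B k) (hN : ∀ x ∈ domPow A k, N x ∈ domPow A k) :
    domPow A (k + 1) ⊆ domPow B (k + 1) := by
  rintro x ⟨hxA, hAx⟩
  obtain ⟨hxB, hBx⟩ := hBA x hxA
  exact ⟨hxB, hBx ▸ hdom (add_mem_domPow hAx (hN x (domPow_succ_subset ⟨hxA, hAx⟩)))⟩

theorem sobNorm_succ_le_of_apply_eq_add (hA : A.IsFormalAdjoint A)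
    (hBA : ∀ x (hx : x ∈ A.domain), ∃ hx' : x ∈ B.domain, B ⟨x, hx'⟩ = A ⟨x, hx⟩ + N x)
    (hdom : domPow A k ⊆ domPow B k) (hC : 0 ≤ C)
    (hBk : SobNormDominated A B k C)
    (hN : ∀ x ∈ domPow A k, N x ∈ domPow A k) (hCₙ : 0 ≤ Cₙ)
    (hNk : SobNormBounded A N k Cₙ) :
    SobNormDominated A B (k + 1) (2 * C * (1 + Cₙ) + 1) := by
  intro x hxA hxB
  have hxk : x ∈ domPow A k := domPow_succ_subset hxA
  have hNx := hN x hxk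
  have hsum := add_mem_domPow hxA.2 hNx
  obtain ⟨hx', hBx⟩ := hBA x hxA.1
  have hBpow :
      ‖powApply B (k + 1) x hxB‖ ≤ C * (2 * (1 + Cₙ)) * sobNorm A (k + 1) x hxA := by
    calc ‖powApply B (k + 1) x hxB‖
        ≤ sobNorm B k (B ⟨x, hx'⟩) hxB.2 := by
          rw [powApply_succ hxB hx' hxB.2]; exact norm_powApply_le_sobNorm _
      _ = sobNorm B k (A ⟨x, hxA.1⟩ + N x) (hdom hsum) := by congr 1
      _ ≤ C * sobNorm A k (A ⟨x, hxA.1⟩ + N x) hsum := hBk _ _ _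
      _ ≤ C * (sobNorm A k (A ⟨x, hxA.1⟩) hxA.2 + sobNorm A k (N x) hNx) := by
        gcongr; exact sobNorm_add_le _ _ _
      _ ≤ C * (2 * sobNorm A (k + 1) x hxA + Cₙ * (2 * sobNorm A (k + 1) x hxA)) := by
        gcongr
        · exact sobNorm_apply_le hA _ _ _
        · exact (hNk x hxk hNx).trans (by gcongr; exact sobNorm_le_of_le hA k.le_succ _ _)
      _ = C * (2 * (1 + Cₙ)) * sobNorm A (k + 1) x hxA := by ring
  linarith [sobNorm_le_add hxB, norm_le_sobNorm (A := A) hxA]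

theorem sobNormBounded_zero (M : E →L[ℂ] E) : SobNormBounded A M 0 ‖M‖ := by
  intro x hx hMx
  rw [sobNorm_zero, sobNorm_zero, mul_left_comm]
  gcongr
  exact M.le_opNorm x

end SobolevScale

section AddBounded

variable {E : Type*} [NormedAddCommGroup E] [InnerProductSpace ℂ E]
  {T : E →ₗ.[ℂ] E} {M : E →L[ℂ] E}

theorem addBounded_apply (x : E) (hx : x ∈ T.domain) :
    addBounded T M ⟨x, hx⟩ = T ⟨x, hx⟩ + M x :=
  rfl

theorem isFormalAdjoint_addBounded (hT : T.IsFormalAdjoint T)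
    (hM : ∀ x y : E, ⟪M x, y⟫_ℂ = ⟪x, M y⟫_ℂ) :
    (addBounded T M).IsFormalAdjoint (addBounded T M) := fun u v => by
  change ⟪T ⟨u, u.2⟩ + M u, (v : E)⟫_ℂ = ⟪(u : E), T ⟨v, v.2⟩ + M v⟫_ℂ
  rw [inner_add_left, inner_add_right, hT ⟨u, u.2⟩ ⟨v, v.2⟩, hM]

theorem domPow_addBounded_eq_and_sobNormDominated (hT : T.IsFormalAdjoint T)
    (hM : ∀ x y : E, ⟪M x, y⟫_ℂ = ⟪x, M y⟫_ℂ) (hmap : ∀ k, ∀ x ∈ domPow T k, M x ∈ domPow T k)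
    (hbdd : ∀ k, ∃ C, 0 ≤ C ∧ SobNormBounded T M k C) (k : ℕ) :
    domPow (addBounded T M) k = domPow T k ∧
      (∃ C, 0 < C ∧ SobNormDominated T (addBounded T M) k C) ∧
      ∃ C, 0 < C ∧ SobNormDominated (addBounded T M) T k C := by
  set S := addBounded T M
  induction k with
  | zero =>
    have hrefl : ∀ (A B : E →ₗ.[ℂ] E), SobNormDominated A B 0 1 := fun _ _ _ _ _ => (one_mul _).ge
    exact ⟨rfl, ⟨1, one_pos, hrefl T S⟩, 1, one_pos, hrefl S T⟩
  | succ k ih =>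
    obtain ⟨hdomPow, ⟨C₁, hC₁, hS_le⟩, C₂, hC₂, hT_le⟩ := ih
    obtain ⟨Cₘ, hCₘ, hMT⟩ := hbdd k
    have hmapS : ∀ x ∈ domPow S k, -M x ∈ domPow S k := fun x hx =>
      neg_mem_domPow (hdomPow ▸ hmap k x (hdomPow ▸ hx))
    have hMS : SobNormBounded S (fun x => -M x) k (C₁ * Cₘ * C₂) := by
      intro x hx hMx
      have hxT : x ∈ domPow T k := hdomPow ▸ hx
      have hMxT := hmap k x hxT
      calc sobNorm S k (-M x) hMx = sobNorm S k (M x) (hdomPow ▸ hMxT) := sobNorm_neg _ _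
        _ ≤ C₁ * sobNorm T k (M x) hMxT := hS_le _ _ _
        _ ≤ C₁ * (Cₘ * (C₂ * sobNorm S k x hx)) := by
          gcongr
          exact (hMT x hxT hMxT).trans (by gcongr; exact hT_le x hx hxT)
        _ = C₁ * Cₘ * C₂ * sobNorm S k x hx := by ring
    have hS_apply : ∀ x (hx : x ∈ T.domain), ∃ hx' : x ∈ S.domain, S ⟨x, hx'⟩ = T ⟨x, hx⟩ + M x :=
      fun x hx => ⟨hx, rfl⟩
    have hT_apply :
        ∀ x (hx : x ∈ S.domain), ∃ hx' : x ∈ T.domain, T ⟨x, hx'⟩ = S ⟨x, hx⟩ + -M x :=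
      fun x hx => ⟨hx, eq_add_neg_of_add_eq (addBounded_apply (T := T) (M := M) x hx).symm⟩
    have hS := isFormalAdjoint_addBounded hT hM
    refine ⟨subset_antisymm ?_ ?_, ⟨2 * C₁ * (1 + Cₘ) + 1, by positivity, ?_⟩,
      2 * C₂ * (1 + C₁ * Cₘ * C₂) + 1, by positivity, ?_⟩
    · exact domPow_succ_subset_of_apply_eq_add hT_apply hdomPow.subset hmapS
    · exact domPow_succ_subset_of_apply_eq_add hS_apply hdomPow.superset (hmap k)
    · exact sobNorm_succ_le_of_apply_eq_add hT hS_apply hdomPow.superset hC₁.le hS_le (hmap k)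
        hCₘ hMT
    · exact sobNorm_succ_le_of_apply_eq_add hS hT_apply hdomPow.subset hC₂.le hT_le hmapS
        (by positivity) hMS

end AddBounded

/-- Sobolev-scale stability (after Iochum–Levy–Vassilevich): if `T` is densely defined
self-adjoint, `M` is bounded self-adjoint, and for every `k ≥ 1` the operator `M` maps
`dom T^k` into itself boundedly for the Sobolev norm `‖·‖_{T,k}`, then for every `k ≥ 1`
one has `dom (T + M)^k = dom T^k` and the Sobolev norms `‖·‖_{T,k}` and `‖·‖_{T+M,k}`
are equivalent on this common domain. -/
theorem statement5 (T : H →ₗ.[ℂ] H)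
    (hdense : Dense (T.domain : Set H))
    (hT : T.adjoint = T)
    (M : H →L[ℂ] H)
    (hM : ∀ x y : H, ⟪M x, y⟫_ℂ = ⟪x, M y⟫_ℂ)
    (hmap : ∀ k : ℕ, 1 ≤ k → ∀ x ∈ domPow T k, M x ∈ domPow T k)
    (hbdd : ∀ k : ℕ, 1 ≤ k → ∃ C : ℝ, 0 < C ∧
      ∀ (x : H) (hx : x ∈ domPow T k) (hMx : M x ∈ domPow T k),
        sobNorm T k (M x) hMx ≤ C * sobNorm T k x hx) :
    ∀ k : ℕ, 1 ≤ k →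
      domPow (addBounded T M) k = domPow T k ∧
      ∃ c : ℝ, 0 < c ∧ ∃ C : ℝ, 0 < C ∧
        ∀ (x : H) (hx : x ∈ domPow T k) (hx' : x ∈ domPow (addBounded T M) k),
          c * sobNorm T k x hx ≤ sobNorm (addBounded T M) k x hx' ∧
          sobNorm (addBounded T M) k x hx' ≤ C * sobNorm T k x hx := by
  have hsym : T.IsFormalAdjoint T := by
    simpa only [hT] using LinearPMap.adjoint_isFormalAdjoint hdense
  have hmap' : ∀ k, ∀ x ∈ domPow T k, M x ∈ domPow T k
    | 0, _, _ => trivial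
    | k + 1, x, hx => hmap (k + 1) (Nat.le_add_left 1 k) x hx
  have hbdd' : ∀ k, ∃ C, 0 ≤ C ∧ SobNormBounded T M k C
    | 0 => ⟨‖M‖, norm_nonneg M, sobNormBounded_zero M⟩
    | k + 1 => (hbdd (k + 1) (Nat.le_add_left 1 k)).imp fun _ hC => ⟨hC.1.le, hC.2⟩
  intro k _
  obtain ⟨hdomPow, ⟨C, hC, hS_le⟩, C', hC', hT_le⟩ :=
    domPow_addBounded_eq_and_sobNormDominated hsym hM hmap' hbdd' k
  refine ⟨hdomPow, C'⁻¹, inv_pos.mpr hC', C, hC, fun x hx hx' => ⟨?_, hS_le x hx hx'⟩⟩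
  rw [inv_mul_le_iff₀ hC']
  exact hT_le x hx' hx
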